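/- There exist universal constants C₁, C₂ > 0 with the following property. Let S ⊆ ℕ be finite with |S| = m, V_m := span{B_j : j ∈ S}, and let y_1,…,y_n be i.i.d. samples with distribution μ := w^{-1}·ρ. Then for every s with 1 ≤ s ≤ m and every δ ∈ (0,1], the probability that RIP(M_{ω,s} ∩ V_m, δ) fails is at most C₁ (C₂ m/δ)^s exp(−(n/2)(δ/s)²). -/

import Mathlib

/-!
Fix a support `T ⊆ S` with `∑_{j ∈ T} ω_j² ≤ s` and a unit coefficient vector `u` on `T`. The
random variable `w · (∑_{j ∈ T} u_j B_j)²` has mean `‖u‖² = 1` under `μ = w⁻¹ ρ` and, by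
Cauchy–Schwarz and `‖B_j‖_{w,∞} ≤ ω_j`, takes values in `[0, s]`. By Hoeffding's inequality its
empirical mean is at least `δ/2` away from `1` with probability at most `2 exp(-(n/2)(δ/s)²)`.
If the empirical norm is `δ/2`-accurate on a `δ/8`-net of the unit sphere of `ℝ^T`, it is
`δ`-accurate on all of `ℝ^T`; such a net has at most `(17/δ)^|T|` points. Since `∫ w⁻¹ dρ = 1`
forces `ω_j² ≥ ‖B_j‖² = 1`, every admissible support has `|T| ≤ s`, so there are at most `(2m)^s`
of them, and a union bound gives the claim with `C₁ = 2` and `C₂ = 2 · 17`.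
-/

open MeasureTheory ENNReal
open scoped NNReal

namespace Metric

theorem IsCover.exists_norm_sub_le {E : Type*} [SeminormedAddCommGroup E] {θ : ℝ≥0}
    {s N : Set E} (h : IsCover θ s N) {x : E} (hx : x ∈ s) : ∃ y ∈ N, ‖x - y‖ ≤ θ := by
  obtain ⟨y, hy, hxy⟩ := h hx
  refine ⟨y, hy, ?_⟩
  rw [← dist_eq_norm, dist_nndist, NNReal.coe_le_coe, ← ENNReal.coe_le_coe, ← edist_nndist]
  exact hxy

open Module

variable {E : Type*} [NormedAddCommGroup E] [NormedSpace ℝ E] [FiniteDimensional ℝ E]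

theorem IsSeparated.card_le_of_subset_sphere {θ : ℝ≥0} (hθ : 0 < θ) {P : Finset E}
    (hP : (P : Set E) ⊆ sphere 0 1) (hsep : IsSeparated θ (P : Set E)) :
    (P.card : ℝ) ≤ (1 + 2 / θ) ^ finrank ℝ E := by
  let _ : MeasurableSpace E := borel E
  have : BorelSpace E := ⟨rfl⟩
  set r : ℝ := θ / 2 with hr_def
  have hr : 0 < r := by positivity
  have hdisj : (P : Set E).PairwiseDisjoint (ball · r) := fun u hu v hv huv => by
    refine ball_disjoint_ball ?_
    have : (θ : ℝ≥0∞) < edist u v := hsep hu hv huv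
    rw [edist_nndist, ENNReal.coe_lt_coe, ← NNReal.coe_lt_coe, coe_nndist] at this
    linarith
  have hsub : ⋃ u ∈ P, ball u r ⊆ ball 0 (1 + r) := Set.iUnion₂_subset fun u hu =>
    ball_subset_ball' (by rw [mem_sphere.1 (hP hu), add_comm])
  have hvol : (P.card : ℝ≥0∞) * ENNReal.ofReal (r ^ finrank ℝ E) ≤
      ENNReal.ofReal ((1 + r) ^ finrank ℝ E) := by
    have hball := (measure_ball_pos Measure.addHaar (0 : E) one_pos).ne'
    have hball' := (measure_ball_lt_top (μ := (Measure.addHaar : Measure E)) (x := 0) (r := 1)).ne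
    rw [← ENNReal.mul_le_mul_iff_left hball hball', mul_assoc,
      ← Measure.addHaar_ball_of_pos _ 0 hr, ← Measure.addHaar_ball_of_pos _ 0 (by positivity)]
    calc (P.card : ℝ≥0∞) * Measure.addHaar (ball (0 : E) r)
        = ∑ u ∈ P, Measure.addHaar (ball u r) := by simp [Measure.addHaar_ball_center]
      _ = Measure.addHaar (⋃ u ∈ P, ball u r) :=
          (measure_biUnion_finset hdisj fun u _ => measurableSet_ball).symm
      _ ≤ _ := measure_mono hsub
  rw [← ENNReal.ofReal_natCast, ← ENNReal.ofReal_mul (by positivity),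
    ENNReal.ofReal_le_ofReal_iff (by positivity), ← le_div_iff₀ (by positivity), ← div_pow] at hvol
  refine hvol.trans_eq (congrArg (· ^ finrank ℝ E) ?_)
  rw [hr_def]
  field_simp
  ring

theorem packingNumber_sphere_lt_top {θ : ℝ≥0} (hθ : 0 < θ) :
    packingNumber θ (sphere (0 : E) 1) < ⊤ := by
  set K := ⌊(1 + 2 / θ : ℝ) ^ finrank ℝ E⌋₊
  refine lt_of_le_of_lt (b := (K : ℕ∞)) (iSup₂_le fun C hC => iSup_le fun hsep => ?_)
    (ENat.natCast_lt_top K)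
  by_contra! hlt
  obtain ⟨P, hPC, hPcard⟩ := Set.exists_subset_encard_eq (Order.add_one_le_of_lt hlt)
  have hPfin : P.Finite := Set.finite_of_encard_eq_coe (k := K + 1) (by simpa using hPcard)
  have hcard := IsSeparated.card_le_of_subset_sphere hθ (P := hPfin.toFinset)
    (by simpa using hPC.trans hC) (by simpa using hsep.subset hPC)
  have hPcard' : hPfin.toFinset.card = K + 1 := by
    have := hPfin.encard_eq_coe_toFinset_card
    rw [hPcard] at this
    exact_mod_cast this.symm
  rw [hPcard'] at hcard
  push_cast at hcard
  linarith [Nat.lt_floor_add_one ((1 + 2 / θ : ℝ) ^ finrank ℝ E)]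

theorem exists_finset_isCover_sphere {θ : ℝ≥0} (hθ : 0 < θ) :
    ∃ N : Finset E, (N : Set E) ⊆ sphere 0 1 ∧ IsCover θ (sphere (0 : E) 1) N ∧
      (N.card : ℝ) ≤ (1 + 2 / θ) ^ finrank ℝ E := by
  have hfin := (packingNumber_sphere_lt_top (E := E) hθ).ne
  have hN : (maximalSeparatedSet θ (sphere (0 : E) 1)).Finite :=
    Set.encard_ne_top_iff.mp (by rwa [encard_maximalSeparatedSet hfin])
  refine ⟨hN.toFinset, by simpa using maximalSeparatedSet_subset,
    by simpa using isCover_maximalSeparatedSet hfin, ?_⟩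
  exact IsSeparated.card_le_of_subset_sphere hθ (by simpa using maximalSeparatedSet_subset)
    (by simpa using isSeparated_maximalSeparatedSet)

theorem exists_finset_isCover_sphere_euclideanSpace (ι : Type*) [Fintype ι] {δ : ℝ}
    (hδ0 : 0 < δ) (hδ1 : δ ≤ 1) :
    ∃ N : Finset (EuclideanSpace ℝ ι), (N : Set (EuclideanSpace ℝ ι)) ⊆ sphere 0 1 ∧
      IsCover (δ / 8).toNNReal (sphere (0 : EuclideanSpace ℝ ι) 1) N ∧
      (N.card : ℝ) ≤ (17 / δ) ^ Fintype.card ι := by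
  obtain ⟨N, hNsphere, hNcover, hNcard⟩ :=
    exists_finset_isCover_sphere (E := EuclideanSpace ℝ ι) (θ := (δ / 8).toNNReal)
      (by simpa using hδ0)
  refine ⟨N, hNsphere, hNcover, hNcard.trans ?_⟩
  rw [finrank_euclideanSpace, Real.coe_toNNReal _ (by positivity)]
  gcongr
  calc 1 + 2 / (δ / 8) = (δ + 16) / δ := by field_simp; ring
    _ ≤ 17 / δ := by gcongr; linarith

end Metric

namespace ContinuousLinearMap

open Metric

variable {E F : Type*} [NormedAddCommGroup E] [NormedSpace ℝ E]
  [NormedAddCommGroup F] [NormedSpace ℝ F]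

theorem opNorm_mul_one_sub_le_of_isCover_sphere (Φ : E →L[ℝ] F) {θ : ℝ≥0} {N : Set E}
    (hN : IsCover θ (sphere 0 1) N) {a : ℝ} (ha : 0 ≤ a) (hΦN : ∀ u ∈ N, ‖Φ u‖ ≤ a) :
    ‖Φ‖ * (1 - θ) ≤ a := by
  have : ‖Φ‖ ≤ a + θ * ‖Φ‖ := opNorm_le_of_unit_norm (by positivity) fun v hv => by
    obtain ⟨u, hu, hvu⟩ := hN.exists_norm_sub_le (mem_sphere_zero_iff_norm.2 hv)
    calc ‖Φ v‖ ≤ ‖Φ u‖ + ‖Φ (v - u)‖ := by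
          rw [map_sub]; exact norm_le_norm_add_norm_sub' _ _
      _ ≤ a + θ * ‖Φ‖ := by
          gcongr
          · exact hΦN u hu
          · exact (Φ.le_opNorm _).trans (by rw [mul_comm]; gcongr)
  linarith

variable {θ : ℝ≥0} {δ : ℝ} {N : Set E}

theorem opNorm_sq_le_of_isCover_sphere (Φ : E →L[ℝ] F) (hδ : δ ≤ 1) (hθδ : 8 * θ ≤ δ)
    (hN : IsCover θ (sphere 0 1) N) (hΦN : ∀ u ∈ N, ‖Φ u‖ ^ 2 ≤ 1 + δ / 2) :
    ‖Φ‖ ^ 2 ≤ 1 + δ := by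
  have h := Φ.opNorm_mul_one_sub_le_of_isCover_sphere hN (Real.sqrt_nonneg (1 + δ / 2))
    fun u hu => Real.le_sqrt_of_sq_le (hΦN u hu)
  have hθ : (0 : ℝ) ≤ θ := θ.2
  have h2 := pow_le_pow_left₀ (by nlinarith [norm_nonneg Φ]) h 2
  rw [Real.sq_sqrt (by linarith)] at h2
  have h3 : ‖Φ‖ ^ 2 * (1 - δ / 4) ≤ (1 + δ) * (1 - δ / 4) := by
    nlinarith [mul_le_mul_of_nonneg_left (show 1 - δ / 4 ≤ (1 - θ) ^ 2 by nlinarith)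
      (sq_nonneg ‖Φ‖)]
  exact le_of_mul_le_mul_right h3 (by linarith)

theorem abs_norm_sq_apply_sub_one_le_of_isCover_sphere (Φ : E →L[ℝ] F) (hδ : δ ≤ 1)
    (hθδ : 8 * θ ≤ δ) (hN : IsCover θ (sphere 0 1) N)
    (hΦN : ∀ u ∈ N, |‖Φ u‖ ^ 2 - 1| ≤ δ / 2) {v : E} (hv : ‖v‖ = 1) :
    |‖Φ v‖ ^ 2 - 1| ≤ δ := by
  have hθ : (0 : ℝ) ≤ θ := θ.2
  set M := ‖Φ‖
  have hM : M ^ 2 ≤ 1 + δ := Φ.opNorm_sq_le_of_isCover_sphere hδ hθδ hN fun u hu => by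
    linarith [(abs_le.1 (hΦN u hu)).2]
  have hΦv : ‖Φ v‖ ≤ M := by simpa [hv] using Φ.le_opNorm v
  obtain ⟨u, hu, hvu⟩ := hN.exists_norm_sub_le (mem_sphere_zero_iff_norm.2 hv)
  obtain ⟨hu1, hu2⟩ := abs_le.1 (hΦN u hu)
  set b := ‖Φ u‖
  have hb0 : 0 ≤ b := norm_nonneg _
  have hlow : b - θ * M ≤ ‖Φ v‖ := by
    have : ‖Φ (u - v)‖ ≤ M * θ := (Φ.le_opNorm _).trans (by rw [norm_sub_rev]; gcongr)
    have := norm_le_norm_add_norm_sub' (Φ u) (Φ v)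
    rw [← map_sub] at this
    linarith
  have hθM : θ * M ≤ b := by
    have hθ2 : (θ : ℝ) ^ 2 ≤ 1 / 64 := by nlinarith
    refine (pow_le_pow_iff_left₀ (by positivity) hb0 two_ne_zero).1 ?_
    nlinarith [mul_le_mul hθ2 hM (sq_nonneg M) (by norm_num)]
  have hbM : b * M ≤ 7 / 4 := by nlinarith [sq_nonneg (b - M)]
  have hsq : (b - θ * M) ^ 2 ≤ ‖Φ v‖ ^ 2 := pow_le_pow_left₀ (by linarith) hlow 2
  rw [abs_le]
  constructor
  · nlinarith [mul_le_mul_of_nonneg_left hbM hθ]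
  · nlinarith [pow_le_pow_left₀ (norm_nonneg _) hΦv 2]

theorem abs_norm_sq_apply_sub_le_of_isCover_sphere (Φ : E →L[ℝ] F) (hδ : δ ≤ 1)
    (hθδ : 8 * θ ≤ δ) (hN : IsCover θ (sphere 0 1) N)
    (hΦN : ∀ u ∈ N, |‖Φ u‖ ^ 2 - 1| ≤ δ / 2) (v : E) :
    |‖Φ v‖ ^ 2 - ‖v‖ ^ 2| ≤ δ * ‖v‖ ^ 2 := by
  rcases eq_or_ne v 0 with rfl | hv
  · simp
  have hscale : ‖Φ v‖ = ‖v‖ * ‖Φ (‖v‖⁻¹ • v)‖ := by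
    rw [map_smul, norm_smul, norm_inv, norm_norm, mul_inv_cancel_left₀ (norm_ne_zero_iff.2 hv)]
  rw [hscale, mul_pow, ← mul_sub_one, abs_mul, abs_of_nonneg (by positivity), mul_comm δ]
  gcongr
  exact Φ.abs_norm_sq_apply_sub_one_le_of_isCover_sphere hδ hθδ hN hΦN (norm_smul_inv_norm hv)

end ContinuousLinearMap

namespace ProbabilityTheory

variable {Y : Type*} [MeasurableSpace Y] {μ : Measure Y} [IsProbabilityMeasure μ]
  {X : Y → ℝ} {a b t : ℝ} {n : ℕ}

theorem average_sub_integral_eq (X : Y → ℝ) (μ : Measure Y) (hn : 0 < n) (ys : Fin n → Y) :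
    (n : ℝ)⁻¹ * ∑ i, X (ys i) - μ[X] = (n : ℝ)⁻¹ * ∑ i, (X (ys i) - μ[X]) := by
  rw [Finset.sum_sub_distrib, Finset.sum_const, Finset.card_univ, Fintype.card_fin, nsmul_eq_mul]
  field_simp

theorem measure_pi_le_average_sub_integral (hX : Measurable X)
    (hXab : ∀ᵐ y ∂μ, X y ∈ Set.Icc a b) (ht : 0 ≤ t) (hn : 0 < n) :
    Measure.pi (fun _ : Fin n => μ) {ys | t ≤ (n : ℝ)⁻¹ * ∑ i, X (ys i) - μ[X]} ≤
      ENNReal.ofReal (Real.exp (-2 * n * t ^ 2 / (b - a) ^ 2)) := by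
  have hn' : (0 : ℝ) < n := Nat.cast_pos.2 hn
  have hsubG : ∀ i : Fin n, HasSubgaussianMGF (fun ys : Fin n → Y => X (ys i) - μ[X])
      ((‖b - a‖₊ / 2) ^ 2) (Measure.pi fun _ => μ) := fun i => by
    refine HasSubgaussianMGF.of_map (Y := fun ys : Fin n → Y => ys i)
      (X := fun y => X y - μ[X]) (measurable_pi_apply i).aemeasurable ?_
    rw [(measurePreserving_eval (fun _ : Fin n => μ) i).map_eq]
    exact hasSubgaussianMGF_of_mem_Icc hX.aemeasurable hXab
  have hHoeffding := HasSubgaussianMGF.measure_sum_ge_le_of_iIndepFun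
    (iIndepFun_pi (X := fun _ y => X y - μ[X]) fun _ => (hX.sub_const _).aemeasurable)
    (s := Finset.univ) (fun i _ => hsubG i) (mul_nonneg hn'.le ht)
  calc _ ≤ Measure.pi (fun _ : Fin n => μ) {ys | n * t ≤ ∑ i, (X (ys i) - μ[X])} :=
        measure_mono fun ys hys => (le_inv_mul_iff₀ hn').1
          (average_sub_integral_eq X μ hn ys ▸ hys)
    _ ≤ _ := by
        rw [← ofReal_measureReal]
        refine ENNReal.ofReal_le_ofReal (hHoeffding.trans_eq ?_)
        simp only [Finset.sum_const, Finset.card_univ, Fintype.card_fin, nsmul_eq_mul]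
        push_cast
        rw [Real.norm_eq_abs, div_pow, sq_abs]
        field_simp

theorem measure_pi_le_abs_average_sub_integral (hX : Measurable X)
    (hXab : ∀ᵐ y ∂μ, X y ∈ Set.Icc a b) (ht : 0 ≤ t) (hn : 0 < n) :
    Measure.pi (fun _ : Fin n => μ) {ys | t ≤ |(n : ℝ)⁻¹ * ∑ i, X (ys i) - μ[X]|} ≤
      ENNReal.ofReal (2 * Real.exp (-2 * n * t ^ 2 / (b - a) ^ 2)) := by
  have hXneg : ∀ᵐ y ∂μ, (-X) y ∈ Set.Icc (-b) (-a) := by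
    filter_upwards [hXab] with y hy using ⟨neg_le_neg hy.2, neg_le_neg hy.1⟩
  have hlower := measure_pi_le_average_sub_integral hX.neg hXneg ht hn
  rw [show -a - -b = b - a by ring] at hlower
  calc _ ≤ Measure.pi (fun _ : Fin n => μ)
        ({ys | t ≤ (n : ℝ)⁻¹ * ∑ i, X (ys i) - μ[X]} ∪
          {ys | t ≤ (n : ℝ)⁻¹ * ∑ i, (-X) (ys i) - μ[-X]}) := by
        refine measure_mono fun ys hys => ?_
        have hneg : (n : ℝ)⁻¹ * ∑ i, (-X) (ys i) - μ[-X] =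
            -((n : ℝ)⁻¹ * ∑ i, X (ys i) - μ[X]) := by
          simp only [Pi.neg_apply, integral_neg, Finset.sum_neg_distrib]
          ring
        rcases le_abs'.1 (Set.mem_ofPred.1 hys) with h | h
        · exact Or.inr (Set.mem_ofPred.2 (by rw [hneg]; linarith))
        · exact Or.inl h
    _ ≤ _ := by
        refine (measure_union_le _ _).trans ?_
        rw [two_mul, ENNReal.ofReal_add (Real.exp_pos _).le (Real.exp_pos _).le]
        exact add_le_add (measure_pi_le_average_sub_integral hX hXab ht hn) hlower

end ProbabilityTheory

section WeightedL2

variable {Y ι : Type*} [MeasurableSpace Y] {ρ : Measure Y} {B : ι → Y → ℝ}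

theorem ae_mul_sq_sum_le {w : Y → ℝ} (hw : ∀ y, 0 ≤ w y) {ω : ι → ℝ}
    (hω : ∀ i, ∀ᵐ y ∂ρ, w y * B i y ^ 2 ≤ ω i ^ 2) (T : Finset ι) (c : ι → ℝ) :
    ∀ᵐ y ∂ρ, w y * (∑ i ∈ T, c i * B i y) ^ 2 ≤ (∑ i ∈ T, c i ^ 2) * ∑ i ∈ T, ω i ^ 2 := by
  filter_upwards [(Filter.eventually_all_finset T).2 fun i _ => hω i] with y hy
  calc w y * (∑ i ∈ T, c i * B i y) ^ 2
      ≤ w y * ((∑ i ∈ T, c i ^ 2) * ∑ i ∈ T, B i y ^ 2) := by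
        gcongr
        · exact hw y
        · exact Finset.sum_mul_sq_le_sq_mul_sq _ _ _
    _ = (∑ i ∈ T, c i ^ 2) * ∑ i ∈ T, w y * B i y ^ 2 := by
        rw [Finset.mul_sum, Finset.mul_sum, Finset.mul_sum]; ring_nf
    _ ≤ (∑ i ∈ T, c i ^ 2) * ∑ i ∈ T, ω i ^ 2 := by
        gcongr with i hi
        exact hy i hi

variable [DecidableEq ι]

theorem integral_mul_subtype_of_orthonormal
    (horth : ∀ i j, ∫ y, B i y * B j y ∂ρ = if i = j then 1 else 0) (p : ι → Prop)
    (i j : Subtype p) : ∫ y, B i y * B j y ∂ρ = if i = j then 1 else 0 := by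
  simp only [horth, Subtype.coe_inj]

theorem integrable_mul_of_orthonormal (hB : ∀ i, Measurable (B i))
    (horth : ∀ i j, ∫ y, B i y * B j y ∂ρ = if i = j then 1 else 0) (i j : ι) :
    Integrable (fun y => B i y * B j y) ρ := by
  have hL2 : ∀ k, MemLp (B k) 2 ρ := fun k => by
    rw [memLp_two_iff_integrable_sq (hB k).aestronglyMeasurable]
    refine Integrable.of_integral_ne_zero ?_
    simp [sq, horth k k]
  exact (hL2 i).integrable_mul (hL2 j)

theorem integral_sq_sum_of_orthonormal (hB : ∀ i, Measurable (B i))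
    (horth : ∀ i j, ∫ y, B i y * B j y ∂ρ = if i = j then 1 else 0) (T : Finset ι)
    (c : ι → ℝ) : ∫ y, (∑ i ∈ T, c i * B i y) ^ 2 ∂ρ = ∑ i ∈ T, c i ^ 2 := by
  have hexpand : ∀ y, (∑ i ∈ T, c i * B i y) ^ 2 =
      ∑ i ∈ T, ∑ j ∈ T, c i * c j * (B i y * B j y) := fun y => by
    rw [sq, Finset.sum_mul_sum]
    exact Finset.sum_congr rfl fun i _ => Finset.sum_congr rfl fun j _ => by ring
  have hint := integrable_mul_of_orthonormal hB horth
  simp_rw [hexpand]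
  rw [integral_finsetSum _ fun i _ => integrable_finsetSum _ fun j _ => (hint i j).const_mul _]
  refine Finset.sum_congr rfl fun i hi => ?_
  rw [integral_finsetSum _ fun j _ => (hint i j).const_mul _]
  simp [integral_const_mul, horth, hi, sq]

theorem one_le_of_ae_mul_sq_le (hB : ∀ i, Measurable (B i))
    (horth : ∀ i j, ∫ y, B i y * B j y ∂ρ = if i = j then 1 else 0) {w : Y → ℝ}
    (hw : ∀ y, 0 < w y) (hwint : ∫ y, (w y)⁻¹ ∂ρ = 1) {i : ι} {C : ℝ}
    (hC : ∀ᵐ y ∂ρ, w y * B i y ^ 2 ≤ C) : 1 ≤ C := by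
  have hwinv : Integrable (fun y => (w y)⁻¹) ρ := .of_integral_ne_zero (by simp [hwint])
  calc (1 : ℝ) = ∫ y, B i y * B i y ∂ρ := by simp [horth]
    _ ≤ ∫ y, C * (w y)⁻¹ ∂ρ := by
        refine integral_mono_ae (integrable_mul_of_orthonormal hB horth i i)
          (hwinv.const_mul C) ?_
        filter_upwards [hC] with y hy
        rw [← sq, ← div_eq_mul_inv, le_div_iff₀ (hw y), mul_comm]
        exact hy
    _ = C := by rw [integral_const_mul, hwint, mul_one]

end WeightedL2

theorem integral_mul_withDensity_inv {Y : Type*} [MeasurableSpace Y] (ρ : Measure Y)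
    {w : Y → ℝ} (hw : Measurable w) (hwpos : ∀ y, 0 < w y) (g : Y → ℝ) :
    ∫ y, w y * g y ∂(ρ.withDensity fun y => ENNReal.ofReal (w y)⁻¹) = ∫ y, g y ∂ρ := by
  refine (integral_withDensity_eq_integral_smul (f := fun y => (w y)⁻¹.toNNReal)
    hw.inv.real_toNNReal (fun y => w y * g y)).trans
    (integral_congr_ae (ae_of_all _ fun y => ?_))
  simp only [NNReal.smul_def, Real.coe_toNNReal _ (inv_nonneg.2 (hwpos y).le), smul_eq_mul]
  field_simp [(hwpos y).ne']

theorem ae_le_of_essSup_ofReal_le {Y : Type*} [MeasurableSpace Y] {ρ : Measure Y}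
    {f : Y → ℝ} {c : ℝ} (hc : 0 ≤ c)
    (h : essSup (fun y => ENNReal.ofReal (f y)) ρ ≤ ENNReal.ofReal c) : ∀ᵐ y ∂ρ, f y ≤ c := by
  filter_upwards [ae_le_essSup (fun y => ENNReal.ofReal (f y))] with y hy
  exact (ENNReal.ofReal_le_ofReal_iff hc).1 (hy.trans h)

section EmpiricalMap

variable {Y ι : Type*} [Fintype ι] [DecidableEq ι]

noncomputable def empiricalMap (w : Y → ℝ) (f : ι → Y → ℝ) {n : ℕ} (ys : Fin n → Y) :
    EuclideanSpace ℝ ι →L[ℝ] EuclideanSpace ℝ (Fin n) :=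
  LinearMap.toContinuousLinearMap
    (Matrix.toEuclideanLin (Matrix.of fun i j => √(w (ys i) / n) * f j (ys i)))

theorem norm_empiricalMap_apply_sq {w : Y → ℝ} (hw : ∀ y, 0 ≤ w y) (f : ι → Y → ℝ) {n : ℕ}
    (ys : Fin n → Y) (v : EuclideanSpace ℝ ι) :
    ‖empiricalMap w f ys v‖ ^ 2 = (n : ℝ)⁻¹ * ∑ i, w (ys i) * (∑ j, v j * f j (ys i)) ^ 2 := by
  rw [EuclideanSpace.real_norm_sq_eq, Finset.mul_sum]
  refine Finset.sum_congr rfl fun i _ => ?_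
  simp only [empiricalMap, LinearMap.coe_toContinuousLinearMap', Matrix.toLpLin_apply,
    PiLp.toLp_apply, Matrix.mulVec, dotProduct, Matrix.of_apply, mul_assoc, ← Finset.mul_sum]
  rw [mul_pow, Real.sq_sqrt (div_nonneg (hw _) n.cast_nonneg)]
  simp only [mul_comm (v _)]
  ring

end EmpiricalMap

theorem Finset.card_powerset_filter_le_rpow {α : Type*} [DecidableEq α] (S : Finset α)
    (hS : 1 ≤ S.card) {P : Finset α → Prop} [DecidablePred P] {s : ℝ} (hs : 0 ≤ s)
    (hP : ∀ T, P T → (T.card : ℝ) ≤ s) :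
    ((S.powerset.filter P).card : ℝ) ≤ (2 * S.card) ^ s := by
  set K := ⌊s⌋₊
  have hsub : S.powerset.filter P ⊆ (Finset.range (K + 1)).biUnion S.powersetCard := by
    intro T hT
    obtain ⟨hTS, hPT⟩ := Finset.mem_filter.1 hT
    exact Finset.mem_biUnion.2 ⟨T.card, Finset.mem_range.2 (Nat.lt_succ_of_le
      (Nat.le_floor (hP T hPT))), Finset.mem_powersetCard.2 ⟨Finset.mem_powerset.1 hTS, rfl⟩⟩
  have hcard : (S.powerset.filter P).card ≤ (2 * S.card) ^ K := by
    calc _ ≤ ∑ k ∈ Finset.range (K + 1), (S.powersetCard k).card :=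
          (Finset.card_le_card hsub).trans Finset.card_biUnion_le
      _ ≤ ∑ k ∈ Finset.range (K + 1), S.card ^ K := Finset.sum_le_sum fun k hk => by
          rw [Finset.card_powersetCard]
          exact (Nat.choose_le_pow _ _).trans
            (Nat.pow_le_pow_right hS (Nat.lt_succ_iff.1 (Finset.mem_range.1 hk)))
      _ = (K + 1) * S.card ^ K := by simp
      _ ≤ (2 * S.card) ^ K := by
          rw [mul_pow]; exact Nat.mul_le_mul_right _ (Nat.lt_two_pow_self (n := K))
  calc _ ≤ ((2 * S.card : ℕ) : ℝ) ^ (K : ℝ) := by rw [Real.rpow_natCast]; exact_mod_cast hcard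
    _ ≤ (2 * S.card) ^ s := by
        push_cast
        exact Real.rpow_le_rpow_of_exponent_le (by norm_cast; omega) (Nat.floor_le hs)

theorem measure_biUnion_biUnion_le {Ω α : Type*} {β : α → Type*} [MeasurableSpace Ω]
    (μ : Measure Ω) (𝒯 : Finset α) (N : ∀ a, Finset (β a)) (A : ∀ a, β a → Set Ω)
    {K L p : ℝ} (hK : (𝒯.card : ℝ) ≤ K) (hL0 : 0 ≤ L) (hL : ∀ a ∈ 𝒯, ((N a).card : ℝ) ≤ L)
    (hp0 : 0 ≤ p) (hp : ∀ a ∈ 𝒯, ∀ b ∈ N a, μ (A a b) ≤ ENNReal.ofReal p) :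
    μ (⋃ a ∈ 𝒯, ⋃ b ∈ N a, A a b) ≤ ENNReal.ofReal (K * L * p) := by
  calc _ ≤ ∑ a ∈ 𝒯, ∑ b ∈ N a, ENNReal.ofReal p :=
        (measure_biUnion_finset_le _ _).trans (Finset.sum_le_sum fun a ha =>
          (measure_biUnion_finset_le _ _).trans (Finset.sum_le_sum (hp a ha)))
    _ = ENNReal.ofReal (∑ a ∈ 𝒯, ((N a).card : ℝ) * p) := by
        rw [ENNReal.ofReal_sum_of_nonneg fun a _ => by positivity]
        refine Finset.sum_congr rfl fun a _ => ?_
        rw [Finset.sum_const, nsmul_eq_mul, ENNReal.ofReal_mul (Nat.cast_nonneg _),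
          ENNReal.ofReal_natCast]
    _ ≤ ENNReal.ofReal (K * L * p) := by
        refine ENNReal.ofReal_le_ofReal ?_
        rw [← Finset.sum_mul]
        gcongr
        calc ∑ a ∈ 𝒯, ((N a).card : ℝ) ≤ 𝒯.card * L := by
              simpa using Finset.sum_le_card_nsmul 𝒯 _ _ hL
          _ ≤ K * L := by gcongr

section WeightedSparse

open Metric

variable {Y : Type*} [MeasurableSpace Y] {ρ : Measure Y} {B : ℕ → Y → ℝ} {w : Y → ℝ}

theorem measure_pi_le_abs_norm_empiricalMap_sq_sub_one (hB : ∀ i, Measurable (B i))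
    (horth : ∀ i j, ∫ y, B i y * B j y ∂ρ = if i = j then 1 else 0)
    (hw : Measurable w) (hwpos : ∀ y, 0 < w y) {μ : Measure Y} [IsProbabilityMeasure μ]
    (hμ : μ = ρ.withDensity fun y => ENNReal.ofReal (w y)⁻¹) {ω : ℕ → ℝ}
    (hωB : ∀ j, ∀ᵐ y ∂ρ, w y * B j y ^ 2 ≤ ω j ^ 2) {T : Finset ℕ} {s : ℝ}
    (hTs : ∑ j ∈ T, ω j ^ 2 ≤ s) {u : EuclideanSpace ℝ T} (hu : ‖u‖ = 1) {δ : ℝ} (hδ : 0 ≤ δ)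
    {n : ℕ} (hn : 0 < n) :
    Measure.pi (fun _ : Fin n => μ)
        {ys | δ / 2 ≤ |‖empiricalMap w (fun j : T => B j) ys u‖ ^ 2 - 1|} ≤
      ENNReal.ofReal (2 * Real.exp (-((n : ℝ) / 2) * (δ / s) ^ 2)) := by
  set X : Y → ℝ := fun y => w y * (∑ j : T, u j * B j y) ^ 2
  have hXmeas : Measurable X := by
    have : Measurable fun y => ∑ j : T, u j * B j y :=
      Finset.measurable_sum Finset.univ fun j _ => (hB j).const_mul (u j)
    exact hw.mul (this.pow_const 2)
  have hu2 : ∑ j : T, u j ^ 2 = 1 := by rw [← EuclideanSpace.real_norm_sq_eq, hu, one_pow]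
  have hXbound : ∀ᵐ y ∂μ, X y ∈ Set.Icc 0 s := by
    have hac : μ ≪ ρ := hμ ▸ withDensity_absolutelyContinuous _ _
    filter_upwards [hac.ae_le (ae_mul_sq_sum_le (fun y => (hwpos y).le) (fun j : T => hωB j)
      Finset.univ fun j => u j)] with y hy
    refine ⟨mul_nonneg (hwpos y).le (sq_nonneg _), hy.trans ?_⟩
    rwa [hu2, one_mul, Finset.sum_coe_sort T fun j => ω j ^ 2]
  have hXmean : ∫ y, X y ∂μ = 1 := by
    rw [hμ, integral_mul_withDensity_inv ρ hw hwpos, integral_sq_sum_of_orthonormal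
      (fun j : T => hB j) (integral_mul_subtype_of_orthonormal horth (· ∈ T)), hu2]
  have h := ProbabilityTheory.measure_pi_le_abs_average_sub_integral hXmeas hXbound
    (by positivity : 0 ≤ δ / 2) hn
  simp_rw [hXmean] at h
  simp only [norm_empiricalMap_apply_sq (fun y => (hwpos y).le)]
  refine h.trans_eq ?_
  congr 3
  rw [div_pow]
  ring

theorem rip_of_forall_isCover (hB : ∀ i, Measurable (B i))
    (horth : ∀ i j, ∫ y, B i y * B j y ∂ρ = if i = j then 1 else 0) (hw₀ : ∀ y, 0 ≤ w y)
    {ω : ℕ → ℝ} {S : Finset ℕ} {s δ : ℝ} {θ : ℝ≥0} (hδ : δ ≤ 1) (hθδ : 8 * θ ≤ δ)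
    {N : ∀ T : Finset ℕ, Set (EuclideanSpace ℝ T)} (hN : ∀ T, IsCover θ (sphere 0 1) (N T))
    {n : ℕ} (ys : Fin n → Y)
    (hgood : ∀ T ⊆ S, ∑ j ∈ T, ω j ^ 2 ≤ s →
      ∀ u ∈ N T, |‖empiricalMap w (fun j : T => B j) ys u‖ ^ 2 - 1| ≤ δ / 2)
    {c : ℕ → ℝ} (hcs : ∑ j ∈ S.filter (fun j => c j ≠ 0), ω j ^ 2 ≤ s) :
    (1 - δ) * ∫ y, (∑ j ∈ S, c j * B j y) ^ 2 ∂ρ ≤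
        (n : ℝ)⁻¹ * ∑ i, w (ys i) * (∑ j ∈ S, c j * B j (ys i)) ^ 2 ∧
      (n : ℝ)⁻¹ * ∑ i, w (ys i) * (∑ j ∈ S, c j * B j (ys i)) ^ 2 ≤
        (1 + δ) * ∫ y, (∑ j ∈ S, c j * B j y) ^ 2 ∂ρ := by
  set T := S.filter fun j => c j ≠ 0
  set Φ := empiricalMap w (fun j : T => B j) ys
  set v : EuclideanSpace ℝ T := WithLp.toLp 2 fun j => c j
  have hsum : ∀ y, ∑ j ∈ S, c j * B j y = ∑ j : T, v j * B j y := fun y => by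
    rw [Finset.sum_coe_sort T fun j => c j * B j y,
      Finset.sum_filter_of_ne fun j _ h => left_ne_zero_of_mul h]
  have hL2 : ∫ y, (∑ j ∈ S, c j * B j y) ^ 2 ∂ρ = ‖v‖ ^ 2 := by
    simp_rw [hsum]
    rw [integral_sq_sum_of_orthonormal (fun j : T => hB j)
      (integral_mul_subtype_of_orthonormal horth (· ∈ T)), EuclideanSpace.real_norm_sq_eq]
  have hemp : (n : ℝ)⁻¹ * ∑ i, w (ys i) * (∑ j ∈ S, c j * B j (ys i)) ^ 2 = ‖Φ v‖ ^ 2 := by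
    simp_rw [hsum, Φ, norm_empiricalMap_apply_sq hw₀]
  rw [hL2, hemp]
  have h := abs_le.1 (Φ.abs_norm_sq_apply_sub_le_of_isCover_sphere hδ hθδ (hN T)
    (hgood T (Finset.filter_subset _ S) hcs) v)
  constructor <;> linarith [h.1, h.2]

end WeightedSparse

open scoped Classical

/-- (Theorem 4.8: RIP for weighted-sparse sets.) There are universal
constants `C₁, C₂ > 0` such that for i.i.d. samples drawn from `μ = w⁻¹·ρ`, the
probability that RIP(M_{ω,s} ∩ V_m, δ) fails is at most
`C₁ (C₂ m/δ)^s exp(−(n/2)(δ/s)²)`. -/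
theorem weighted_sparse_rip :
    ∃ C₁ C₂ : ℝ, 0 < C₁ ∧ 0 < C₂ ∧
      ∀ (Y : Type) [MeasurableSpace Y] (ρ : Measure Y) [IsProbabilityMeasure ρ]
        (B : ℕ → Y → ℝ), (∀ j, Measurable (B j)) →
        (∀ i j, ∫ y, B i y * B j y ∂ρ = if i = j then 1 else 0) →
        ∀ w : Y → ℝ, Measurable w → (∀ y, 0 < w y) → (∫ y, (w y)⁻¹ ∂ρ = 1) →
        ∀ (μ : Measure Y) [IsProbabilityMeasure μ],
          μ = ρ.withDensity (fun y => ENNReal.ofReal (w y)⁻¹) →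
        ∀ ω : ℕ → ℝ, (∀ j, 0 ≤ ω j) →
        (∀ j, essSup (fun y => ENNReal.ofReal (w y * B j y ^ 2)) ρ ≤
          ENNReal.ofReal (ω j ^ 2)) →
        ∀ (S : Finset ℕ) (m : ℕ), S.card = m →
        ∀ s : ℝ, 1 ≤ s → s ≤ (m : ℝ) →
        ∀ δ : ℝ, 0 < δ → δ ≤ 1 →
        ∀ n : ℕ, 0 < n →
          Measure.pi (fun _ : Fin n => μ)
            {ys : Fin n → Y | ¬ ∀ c : ℕ → ℝ, (∀ j ∉ S, c j = 0) →
              (∑ j ∈ S.filter (fun j => c j ≠ 0), ω j ^ 2 ≤ s) →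
              ((1 - δ) * ∫ y, (∑ j ∈ S, c j * B j y) ^ 2 ∂ρ ≤
                  (n : ℝ)⁻¹ * ∑ i, w (ys i) * (∑ j ∈ S, c j * B j (ys i)) ^ 2 ∧
                (n : ℝ)⁻¹ * ∑ i, w (ys i) * (∑ j ∈ S, c j * B j (ys i)) ^ 2 ≤
                  (1 + δ) * ∫ y, (∑ j ∈ S, c j * B j y) ^ 2 ∂ρ)} ≤
            ENNReal.ofReal
              (C₁ * (C₂ * m / δ) ^ s * Real.exp (-((n : ℝ) / 2) * (δ / s) ^ 2)) := by
  refine ⟨2, 34, two_pos, by norm_num, ?_⟩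
  intro Y _ ρ _ B hB horth w hw hwpos hwint μ _ hμ ω _ hωB S m hSm s hs1 hsm δ hδ0 hδ1 n hn
  have hωB' : ∀ j, ∀ᵐ y ∂ρ, w y * B j y ^ 2 ≤ ω j ^ 2 := fun j =>
    ae_le_of_essSup_ofReal_le (sq_nonneg _) (hωB j)
  have hcard_le : ∀ T : Finset ℕ, ∑ j ∈ T, ω j ^ 2 ≤ s → (T.card : ℝ) ≤ s := fun T hT =>
    le_trans (by simpa using Finset.card_nsmul_le_sum T _ 1 fun j _ =>
      one_le_of_ae_mul_sq_le hB horth hwpos hwint (hωB' j)) hT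
  choose N hNsphere hNcover hNcard using fun T : Finset ℕ =>
    Metric.exists_finset_isCover_sphere_euclideanSpace T hδ0 hδ1
  set 𝒯 := S.powerset.filter fun T => ∑ j ∈ T, ω j ^ 2 ≤ s
  have h𝒯 : (𝒯.card : ℝ) ≤ (2 * m) ^ s := by
    subst hSm
    exact S.card_powerset_filter_le_rpow (by exact_mod_cast hs1.trans hsm) (by linarith) hcard_le
  have hnet : ∀ T ∈ 𝒯, ((N T).card : ℝ) ≤ (17 / δ) ^ s := fun T hT => by
    refine (hNcard T).trans ?_
    rw [Fintype.card_coe, ← Real.rpow_natCast]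
    exact Real.rpow_le_rpow_of_exponent_le ((one_le_div hδ0).2 (by linarith))
      (hcard_le T (Finset.mem_filter.1 hT).2)
  calc _ ≤ Measure.pi (fun _ : Fin n => μ) (⋃ T ∈ 𝒯, ⋃ u ∈ N T,
        {ys | δ / 2 ≤ |‖empiricalMap w (fun j : T => B j) ys u‖ ^ 2 - 1|}) := by
        refine measure_mono fun ys hys => ?_
        by_contra hout
        simp only [Set.mem_iUnion, Set.mem_ofPred_eq, not_exists, not_le, 𝒯, Finset.mem_filter,
          Finset.mem_powerset] at hout
        exact hys fun c _ hcs => rip_of_forall_isCover hB horth (fun y => (hwpos y).le) hδ1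
          (by rw [Real.coe_toNNReal _ (by positivity)]; linarith) hNcover ys
          (fun T hTS hTs u hu => (hout T ⟨hTS, hTs⟩ u hu).le) hcs
    _ ≤ ENNReal.ofReal ((2 * m) ^ s * (17 / δ) ^ s *
          (2 * Real.exp (-((n : ℝ) / 2) * (δ / s) ^ 2))) := by
        refine measure_biUnion_biUnion_le _ 𝒯 N _ h𝒯 (by positivity) hnet (by positivity)
          fun T hT u hu => measure_pi_le_abs_norm_empiricalMap_sq_sub_one hB horth hw hwpos hμ
            hωB' (Finset.mem_filter.1 hT).2 (mem_sphere_zero_iff_norm.1 (hNsphere T hu)) hδ0.le hn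
    _ = _ := by
        rw [← Real.mul_rpow (by positivity) (by positivity),
          show 2 * (m : ℝ) * (17 / δ) = 34 * m / δ by ring]
        congr 1
        ring
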